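/- Let H be a graph, 𝒳 a clustering of H (partition into cliques), and suppose col(H/𝒳) ≤ c and every block of 𝒳 has size at most ω(H). Then col(H) ≤ c · ω(H). In particular, for an induced subgraph H of G^d with clustering 𝒳 satisfying col(G^d/𝒳) ≤ wcol_{2d}(G), one gets col(H) ≤ wcol_{2d}(G) · ω(H). -/

import Mathlib

open SimpleGraph Set

variable {V : Type*}

/-- The `d`-th power of a graph: distinct vertices adjacent iff joined by a walk
of length at most `d`. -/
def gpow (G : SimpleGraph V) (d : ℕ) : SimpleGraph V where
  Adj u v := u ≠ v ∧ ∃ p : G.Walk u v, p.length ≤ d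
  symm := ⟨by
    rintro u v ⟨h, p, hp⟩
    exact ⟨h.symm, p.reverse, by simpa using hp⟩⟩
  loopless := ⟨by rintro u ⟨h, _⟩; exact h rfl⟩

/-- `v` is weakly `r`-reachable from `u` with respect to the ordering `σ`:
there is a path (walk) of length at most `r` from `u` to `v` all of whose
vertices are `≥_σ v`. -/
def wreach (G : SimpleGraph V) (σ : V → ℕ) (r : ℕ) (u v : V) : Prop :=
  ∃ p : G.Walk u v, p.length ≤ r ∧ ∀ x ∈ p.support, σ v ≤ σ x

/-- The weak `r`-coloring number of the ordering `σ`. -/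
noncomputable def wcolOrd (G : SimpleGraph V) (σ : V → ℕ) (r : ℕ) : ℕ :=
  sSup { n | ∃ u, n = {v | wreach G σ r u v}.ncard }

/-- The weak `r`-coloring number of `G`: minimum over (injective) vertex orderings. -/
noncomputable def wcol (G : SimpleGraph V) (r : ℕ) : ℕ :=
  sInf { c | ∃ σ : V → ℕ, Function.Injective σ ∧ wcolOrd G σ r = c }

/-- The coloring number of the ordering `σ`: max over vertices of one plus
the number of earlier neighbors. -/
noncomputable def colOrd (G : SimpleGraph V) (σ : V → ℕ) : ℕ :=
  sSup { n | ∃ u, n = 1 + {v | G.Adj u v ∧ σ v < σ u}.ncard }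

/-- The coloring number of `G` (one plus degeneracy). -/
noncomputable def colNum (G : SimpleGraph V) : ℕ :=
  sInf { c | ∃ σ : V → ℕ, Function.Injective σ ∧ colOrd G σ = c }

/-- Maximum degree. -/
noncomputable def maxDeg (G : SimpleGraph V) : ℕ :=
  sSup { n | ∃ u, n = (G.neighborSet u).ncard }

/-- Clique number. -/
noncomputable def cliqueNum' (G : SimpleGraph V) : ℕ :=
  sSup { n | ∃ s : Finset V, G.IsNClique n s }

/-- A clustering of `H`: a partition of the vertex set into cliques. -/
def IsClustering (H : SimpleGraph V) (𝒳 : Set (Set V)) : Prop :=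
  Setoid.IsPartition 𝒳 ∧ ∀ A ∈ 𝒳, H.IsClique A

/-- The quotient graph `H/𝒳`: blocks are vertices, distinct blocks adjacent iff some
pair of their elements is adjacent in `H`. -/
def quotGraph (H : SimpleGraph V) (𝒳 : Set (Set V)) : SimpleGraph 𝒳 where
  Adj A B := A ≠ B ∧ ∃ a ∈ (A : Set V), ∃ b ∈ (B : Set V), H.Adj a b
  symm := ⟨by
    rintro A B ⟨hne, a, ha, b, hb, hab⟩
    exact ⟨hne.symm, b, hb, a, ha, hab.symm⟩⟩
  loopless := ⟨by rintro A ⟨h, _⟩; exact h rfl⟩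

/-- `S` induces a disjoint union of complete graphs in `H`
(adjacency is transitive on `S`). -/
def IsClusterSet (H : SimpleGraph V) (S : Set V) : Prop :=
  ∀ a ∈ S, ∀ b ∈ S, ∀ c ∈ S, H.Adj a b → H.Adj b c → a ≠ c → H.Adj a c

/-- The subchromatic number: least `c` admitting a `c`-coloring in which every color
class induces a disjoint union of complete graphs. -/
noncomputable def subchrom (H : SimpleGraph V) : ℕ :=
  sInf { c | ∃ f : V → Fin c, ∀ i, IsClusterSet H (f ⁻¹' {i}) }

/-- A semi-ladder of length `k`: `x i` non-adjacent to `y i`, while `x i` adjacent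
to `y j` whenever `i < j`. -/
def IsSemiLadder (H : SimpleGraph V) {k : ℕ} (x y : Fin k → V) : Prop :=
  (∀ i, ¬ H.Adj (x i) (y i)) ∧ ∀ i j, i < j → H.Adj (x i) (y j)

/-- The semi-ladder index of `H` is at most `q`. -/
def semiLadderIndexLE (H : SimpleGraph V) (q : ℕ) : Prop :=
  ∀ (k : ℕ) (x y : Fin k → V), IsSemiLadder H x y → k ≤ q

/-- Closed neighborhood. -/
def closedNbhd (H : SimpleGraph V) (a : V) : Set V := insert a (H.neighborSet a)

/-- Treedepth at most `k`, via a forest (ancestor) order: a strict partial order in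
which ancestors of each vertex form a chain of size `< k`, and every edge joins a
comparable pair. -/
def treedepthLE (G : SimpleGraph V) (k : ℕ) : Prop :=
  ∃ A : V → V → Prop,
    (∀ u v w, A u v → A v w → A u w) ∧ (∀ v, ¬ A v v) ∧
    (∀ a b v, A a v → A b v → a = b ∨ A a b ∨ A b a) ∧
    (∀ u v, G.Adj u v → A u v ∨ A v u) ∧
    (∀ v, {a | A a v}.ncard < k)

namespace Set

theorem ncard_le_mul_ncard_of_mapsTo {α β : Type*} [Finite α] [Finite β] {s : Set α}
    {t : Set β} {f : α → β} (hf : MapsTo f s t) {n : ℕ}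
    (hn : ∀ b, {a | a ∈ s ∧ f a = b}.ncard ≤ n) :
    s.ncard ≤ n * t.ncard := by
  classical
  have := Fintype.ofFinite α
  have := Fintype.ofFinite β
  simp only [ncard_eq_toFinset_card'] at hn ⊢
  refine Finset.card_le_mul_card_image_of_maps_to (f := f) (fun a ha => ?_) n fun b _ => ?_
  · simpa using hf (mem_toFinset.mp ha)
  · convert hn b using 2
    ext
    simp

end Set

section ColoringNumber

variable {W : Type*}

theorem colOrd_le_of_forall {G : SimpleGraph V} {σ : V → ℕ} {k : ℕ}
    (h : ∀ u, 1 + {v | G.Adj u v ∧ σ v < σ u}.ncard ≤ k) : colOrd G σ ≤ k :=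
  csSup_le' <| by rintro n ⟨u, rfl⟩; exact h u

theorem le_colOrd [Finite V] (G : SimpleGraph V) (σ : V → ℕ) (u : V) :
    1 + {v | G.Adj u v ∧ σ v < σ u}.ncard ≤ colOrd G σ := by
  refine le_csSup ⟨1 + Nat.card V, ?_⟩ ⟨u, rfl⟩
  rintro n ⟨w, rfl⟩
  have := ncard_le_card {v | G.Adj w v ∧ σ v < σ w}
  omega

theorem colNum_le_colOrd (G : SimpleGraph V) {σ : V → ℕ} (hσ : σ.Injective) :
    colNum G ≤ colOrd G σ :=
  Nat.sInf_le ⟨σ, hσ, rfl⟩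

theorem exists_colOrd_eq_colNum [Finite V] (G : SimpleGraph V) :
    ∃ σ : V → ℕ, σ.Injective ∧ colOrd G σ = colNum G :=
  let ⟨σ, hσ⟩ := exists_injective_nat V
  Nat.sInf_mem (s := {c | ∃ σ : V → ℕ, σ.Injective ∧ colOrd G σ = c}) ⟨_, σ, hσ, rfl⟩

theorem exists_injective_refining [Finite V] (g : V → ℕ) :
    ∃ τ : V → ℕ, τ.Injective ∧ ∀ a b, τ a < τ b → g a ≤ g b := by
  have := Fintype.ofFinite V
  set N := Fintype.card V
  let e : V → ℕ := fun v => Fintype.equivFin V v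
  have he : ∀ v, e v < N := fun v => (Fintype.equivFin V v).isLt
  refine ⟨fun v => g v * N + e v, fun a b hab => ?_, fun a b hab => ?_⟩
  · have hmod := congrArg (· % N) hab
    simp only [Nat.mul_add_mod_self_right, Nat.mod_eq_of_lt (he a), Nat.mod_eq_of_lt (he b)]
      at hmod
    exact (Fintype.equivFin V).injective (Fin.ext hmod)
  · by_contra! hlt
    have : (g b + 1) * N ≤ g a * N := Nat.mul_le_mul_right N hlt
    have := he b
    nlinarith

/-- `u` and its earlier neighbours lie in the fibres of `p` over `p u` and over the earlier
`Q`-neighbours of `p u`. -/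
theorem colOrd_le_colOrd_mul [Finite V] [Finite W] {H : SimpleGraph V} {Q : SimpleGraph W}
    {p : V → W} (hp : ∀ a b, H.Adj a b → p a ≠ p b → Q.Adj (p a) (p b)) {m : ℕ}
    (hm : ∀ w, {v | p v = w}.ncard ≤ m) {σ : W → ℕ} (hσ : σ.Injective) {τ : V → ℕ}
    (hτ : ∀ a b, τ a < τ b → σ (p a) ≤ σ (p b)) :
    colOrd H τ ≤ colOrd Q σ * m := by
  refine colOrd_le_of_forall fun u => ?_
  set S := {v | H.Adj u v ∧ τ v < τ u}
  set T := {w | Q.Adj (p u) w ∧ σ w < σ (p u)}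
  have hmaps : MapsTo p (insert u S) (insert (p u) T) := by
    rintro v (rfl | ⟨huv, hvu⟩)
    · exact mem_insert _ _
    · by_cases hpv : p v = p u
      · exact hpv ▸ mem_insert _ _
      · exact mem_insert_of_mem _
          ⟨hp u v huv (Ne.symm hpv), (hτ v u hvu).lt_of_ne (hσ.ne hpv)⟩
  have hfiber : ∀ w, {v | v ∈ insert u S ∧ p v = w}.ncard ≤ m := fun w =>
    (ncard_le_ncard fun _ hv => hv.2).trans (hm w)
  calc 1 + S.ncard = (insert u S).ncard := by
        rw [ncard_insert_of_notMem (fun h => H.loopless.irrefl u h.1), add_comm]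
    _ ≤ m * (insert (p u) T).ncard := ncard_le_mul_ncard_of_mapsTo hmaps hfiber
    _ = m * (1 + T.ncard) := by
        rw [ncard_insert_of_notMem (fun h => Q.loopless.irrefl _ h.1), add_comm]
    _ ≤ m * colOrd Q σ := Nat.mul_le_mul_left m (le_colOrd Q σ (p u))
    _ = colOrd Q σ * m := mul_comm _ _

end ColoringNumber

section Clustering

variable {𝒳 : Set (Set V)}

noncomputable def Setoid.IsPartition.block (h𝒳 : Setoid.IsPartition 𝒳) (v : V) : 𝒳 :=
  ⟨(h𝒳.2 v).exists.choose, (h𝒳.2 v).exists.choose_spec.1⟩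

theorem Setoid.IsPartition.mem_block (h𝒳 : Setoid.IsPartition 𝒳) (v : V) :
    v ∈ (h𝒳.block v : Set V) :=
  (h𝒳.2 v).exists.choose_spec.2

theorem Setoid.IsPartition.quotGraph_adj_block (h𝒳 : Setoid.IsPartition 𝒳) {H : SimpleGraph V}
    {a b : V} (hab : H.Adj a b) (hne : h𝒳.block a ≠ h𝒳.block b) :
    (quotGraph H 𝒳).Adj (h𝒳.block a) (h𝒳.block b) :=
  ⟨hne, a, h𝒳.mem_block a, b, h𝒳.mem_block b, hab⟩

theorem Setoid.IsPartition.ncard_block_fiber_le [Finite V] (h𝒳 : Setoid.IsPartition 𝒳)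
    {m : ℕ} (hm : ∀ A ∈ 𝒳, A.ncard ≤ m) (A : 𝒳) : {v | h𝒳.block v = A}.ncard ≤ m :=
  (ncard_le_ncard fun v hv => hv ▸ h𝒳.mem_block v).trans (hm A A.2)

end Clustering

/-- If 𝒳 is a clustering of H with col(H/𝒳) ≤ c and all blocks of size ≤ m,
then col(H) ≤ c·m. -/
theorem stmt15 [Fintype V] (H : SimpleGraph V) (𝒳 : Set (Set V)) (c m : ℕ)
    (hX : IsClustering H 𝒳) (hc : colNum (quotGraph H 𝒳) ≤ c)
    (hm : ∀ A ∈ 𝒳, A.ncard ≤ m) :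
    colNum H ≤ c * m := by
  have hpart := hX.1
  obtain ⟨σ, hσ, hσcol⟩ := exists_colOrd_eq_colNum (quotGraph H 𝒳)
  obtain ⟨τ, hτ, hτσ⟩ := exists_injective_refining (σ ∘ hpart.block)
  calc colNum H ≤ colOrd H τ := colNum_le_colOrd H hτ
    _ ≤ colOrd (quotGraph H 𝒳) σ * m :=
        colOrd_le_colOrd_mul (fun _ _ => hpart.quotGraph_adj_block)
          (hpart.ncard_block_fiber_le hm) hσ hτσ
    _ ≤ c * m := Nat.mul_le_mul_right m (hσcol ▸ hc)
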